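/- arXiv:2101.07188 — 2 statements merged into one kernel-verified Lean document; each statement's English description precedes it below -/
import Mathlib

section
/- Let α be a type withderive at least two distinct elements and let F = FreeGroup α. If G is a normal subgroup of F with G ≠ ⊥, then there exist elements x, y ∈ G such that the centralizer of x in F and the centralizer of y in F intersect trivially, i.e., Subgroup.centralizer {x} ⊓ Subgroup.centralizer {y} = ⊥. -/
/-!
Abelian subgroups of a free group are free (Nielsen–Schreier) on pairwise commuting, hence at
most one, generators, so they are cyclic. Together with uniqueness of roots in free groups this
makes commutation transitive on nontrivial elements, so two non-commuting elements of `G` have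
centralizers meeting trivially. Such elements exist, for otherwise `G` would be infinite
cyclic, `G = ⟨c⟩`, and normal; every `w` would conjugate `c` to `c ^ (± 1)`, so `w ^ 2`, and then
`w`, would commute with `c`, and by transitivity any two generators of the free group would commute.
-/

open Subgroup

section

variable {G : Type*} [Group G]

theorem Commute.of_zpow_right [IsMulTorsionFree G] {a b : G} {n : ℤ}
    (hn : n ≠ 0) (h : Commute a (b ^ n)) : Commute a b := by
  have hconj : (a * b * a⁻¹) ^ n = b ^ n := by
    rw [← MulAut.conj_apply, ← map_zpow, MulAut.conj_apply, h.eq, mul_inv_cancel_right]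
  exact mul_inv_eq_iff_eq_mul.mp (zpow_left_injective hn hconj)

theorem Commute.of_pow_left [IsMulTorsionFree G] {a b : G} {n : ℕ}
    (hn : n ≠ 0) (h : Commute (a ^ n) b) : Commute a b :=
  (Commute.of_zpow_right (n := n) (by exact_mod_cast hn) (by exact_mod_cast h.symm)).symm

/-- Conjugation restricts to an automorphism of the infinite cyclic group `zpowers c`, so it
acts on `c` by `c ↦ c ^ (± 1)`, and its square acts trivially. -/
theorem commute_sq_of_zpowers_normal {c : G} (hc : ¬IsOfFinOrder c) [hN : (zpowers c).Normal]
    (w : G) : Commute (w ^ 2) c := by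
  obtain ⟨k, hk⟩ := mem_zpowers_iff.mp (hN.conj_mem c (mem_zpowers c) w)
  obtain ⟨l, hl⟩ := mem_zpowers_iff.mp (hN.conj_mem c (mem_zpowers c) w⁻¹)
  rw [← MulAut.conj_apply] at hk
  rw [inv_inv, ← MulAut.conj_inv_apply] at hl
  have hlk : l * k = 1 := by
    refine injective_zpow_iff_not_isOfFinOrder.mpr hc (?_ : c ^ (l * k) = c ^ (1 : ℤ))
    rw [zpow_one, zpow_mul, hl, ← map_zpow, hk, MulAut.inv_apply_self]
  have hkk : k * k = 1 := by
    rcases Int.eq_one_or_neg_one_of_mul_eq_one' hlk with ⟨-, rfl⟩ | ⟨-, rfl⟩ <;> rfl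
  have : MulAut.conj (w ^ 2) c = c := by
    rw [map_pow, pow_two, MulAut.mul_apply, ← hk, map_zpow, ← hk, ← zpow_mul, hkk, zpow_one]
  rwa [MulAut.conj_apply, mul_inv_eq_iff_eq_mul] at this

end

theorem FreeGroup.commute_of_iff {α : Type*} {a b : α} : Commute (of a) (of b) ↔ a = b := by
  classical
  refine ⟨fun h => ?_, fun h => h ▸ Commute.refl _⟩
  by_contra hab
  let φ : FreeGroup α →* Equiv.Perm (Fin 3) :=
    FreeGroup.lift fun x => if x = a then Equiv.swap 0 1 else if x = b then Equiv.swap 1 2 else 1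
  have := (h.map φ).eq
  simp only [φ, lift_apply_of, ↓reduceIte, Ne.symm hab] at this
  exact absurd this (by decide)

namespace IsFreeGroup

variable {G : Type*} [Group G] [IsFreeGroup G]

instance : IsMulTorsionFree G :=
  (toFreeGroup G).injective.isMulTorsionFree (toFreeGroup G).toMonoidHom

theorem isCyclic_of_isMulCommutative [IsMulCommutative G] : IsCyclic G := by
  have : Subsingleton (Generators G) := ⟨fun a b => FreeGroup.commute_of_iff.mp <| by
    simpa using (show Commute ((toFreeGroup G).symm (.of a)) ((toFreeGroup G).symm (.of b)) from
      mul_comm' _ _).map (toFreeGroup G)⟩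
  have : IsCyclic (FreeGroup (Generators G)) := by
    cases isEmpty_or_nonempty (Generators G)
    · infer_instance
    · have := uniqueOfSubsingleton (Classical.arbitrary (Generators G))
      infer_instance
  exact isCyclic_of_surjective (toFreeGroup G).symm (toFreeGroup G).symm.surjective

theorem exists_mem_zpowers_of_commute {x y : G} (h : Commute x y) :
    ∃ c : G, x ∈ zpowers c ∧ y ∈ zpowers c := by
  have : IsMulCommutative (closure {x, y}) := isMulCommutative_closure <| by
    rintro a (rfl | rfl) b (rfl | rfl)
    exacts [rfl, h.eq, h.symm.eq, rfl]
  obtain ⟨c, hc⟩ := ((closure {x, y}).isCyclic_iff_exists_zpowers_eq_top).mp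
    isCyclic_of_isMulCommutative
  exact ⟨c, hc ▸ subset_closure (by simp), hc ▸ subset_closure (by simp)⟩

theorem commute_trans {x y z : G} (hxz : Commute x z) (hzy : Commute z y) (hz : z ≠ 1) :
    Commute x y := by
  obtain ⟨c, hxc, hzc⟩ := exists_mem_zpowers_of_commute hxz
  obtain ⟨d, hzd, hyd⟩ := exists_mem_zpowers_of_commute hzy
  obtain ⟨m, rfl⟩ := mem_zpowers_iff.mp hzc
  obtain ⟨n, hdc⟩ := mem_zpowers_iff.mp hzd
  have hn : n ≠ 0 := by rintro rfl; exact hz (by rw [← hdc, zpow_zero])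
  have hcd : Commute c d := .of_zpow_right hn (hdc ▸ (Commute.refl c).zpow_right m)
  obtain ⟨p, rfl⟩ := mem_zpowers_iff.mp hxc
  obtain ⟨q, rfl⟩ := mem_zpowers_iff.mp hyd
  exact hcd.zpow_zpow p q

theorem centralizer_inf_centralizer_eq_bot {x y : G} (hxy : ¬Commute x y) :
    centralizer {x} ⊓ centralizer {y} = ⊥ := by
  refine eq_bot_iff.mpr fun z ⟨hzx, hzy⟩ => mem_bot.mpr ?_
  by_contra hz
  exact hxy (commute_trans (mem_centralizer_singleton_iff.mp hzx).symm
    (mem_centralizer_singleton_iff.mp hzy) hz)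

end IsFreeGroup

namespace FreeGroup

variable {α : Type*}

theorem exists_not_commute_of_normal [Nontrivial α] (N : Subgroup (FreeGroup α)) [N.Normal]
    (hN : N ≠ ⊥) : ∃ x ∈ N, ∃ y ∈ N, ¬Commute x y := by
  by_contra! hcomm
  have : IsMulCommutative N := .of_setLike_mul_comm fun x hx y hy => (hcomm x hx y hy).eq
  obtain ⟨c, rfl⟩ := (N.isCyclic_iff_exists_zpowers_eq_top).mp
    IsFreeGroup.isCyclic_of_isMulCommutative
  have hc : c ≠ 1 := mt zpowers_eq_bot.mpr hN
  have of_commute_c (a : α) : Commute (of a) c :=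
    (commute_sq_of_zpowers_normal (not_isOfFinOrder_of_isMulTorsionFree hc) _).of_pow_left
      two_ne_zero
  obtain ⟨a, b, hab⟩ := exists_pair_ne α
  exact hab <| commute_of_iff.mp <|
    IsFreeGroup.commute_trans (of_commute_c a) (of_commute_c b).symm hc

end FreeGroup

/-- A nontrivial normal subgroup of a non-abelian free group contains two
elements whose centralizers intersect trivially. -/
theorem stmt_3 {α : Type*} (hα : ∃ a b : α, a ≠ b)
    (G : Subgroup (FreeGroup α)) [G.Normal] (hG : G ≠ ⊥) :
    ∃ x ∈ G, ∃ y ∈ G,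
      Subgroup.centralizer {x} ⊓ Subgroup.centralizer {y} = ⊥ := by
  have : Nontrivial α := ⟨hα⟩
  obtain ⟨x, hx, y, hy, hxy⟩ := FreeGroup.exists_not_commute_of_normal G hG
  exact ⟨x, hx, y, hy, IsFreeGroup.centralizer_inf_centralizer_eq_bot hxy⟩
end

section
/- Let α be a type with at least two distinct elements and let F = FreeGroup α. If G is a normal subgroup of F with G ≠ ⊥, then the centralizer of G in F is trivial: the only element of F that commutes with every element of G is the identity. -/
/-!
In a free group the centralizer of an element `u ≠ 1` is, by Nielsen–Schreier, a free group
with nontrivial center, hence cyclic; so commuting with `u` is a transitive relation. Applied to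
some `g ≠ 1` in `G`, this makes the centralizer `C` of `G` abelian, hence cyclic, and `C` is
normal because `G` is. An automorphism of a torsion-free cyclic group is `x ↦ x ^ (±1)`, so
conjugation by `f ^ 2` is trivial on `C` for every `f`. If `C` contained some `x ≠ 1`, then
`of a ^ 2` and `of b ^ 2` would both commute with `x`, hence with each other, which they do not.
-/

theorem IsCyclic.mulAut_sq_eq_one {G : Type*} [Group G] [IsCyclic G] [IsMulTorsionFree G]
    (σ : MulAut G) : σ ^ 2 = 1 := by
  obtain ⟨m, hm⟩ := MonoidHom.map_cyclic σ.toMonoidHom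
  obtain ⟨k, hk⟩ := MonoidHom.map_cyclic σ.symm.toMonoidHom
  simp only [MulEquiv.coe_toMonoidHom] at hm hk
  ext g
  have hg : g ^ (m * k - 1) = 1 := by
    rw [zpow_sub_one, zpow_mul, ← hm, ← hk, σ.symm_apply_apply, mul_inv_cancel]
  rcases IsMulTorsionFree.zpow_eq_one_iff.mp hg with rfl | hmk
  · simp
  · have hmm : m * m = 1 := by
      rcases Int.eq_one_or_neg_one_of_mul_eq_one (u := m) (v := k) (by omega) with rfl | rfl <;> rfl
    rw [pow_two, MulAut.mul_apply, hm, hm, ← zpow_mul, hmm, zpow_one, MulAut.one_apply]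

theorem Subgroup.commute_sq_of_isCyclic {G : Type*} [Group G] [IsMulTorsionFree G]
    {N : Subgroup G} [N.Normal] [IsCyclic N] (f : G) {x : G} (hx : x ∈ N) :
    Commute (f ^ 2) x := by
  have hconj := congrArg (fun σ : MulAut N => (σ ⟨x, hx⟩ : G))
    (IsCyclic.mulAut_sq_eq_one (MulAut.conjNormal f))
  simp only [← map_pow, MulAut.conjNormal_apply, MulAut.one_apply] at hconj
  exact (eq_mul_inv_iff_mul_eq.mp hconj.symm).symm

namespace FreeGroup

variable {β : Type*}

theorem not_commute_of_sq_of_sq {a b : β} (hab : a ≠ b) : ¬Commute (of a ^ 2) (of b ^ 2) := by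
  classical
  intro h
  -- the 3-cycles (0 1 2) and (2 3 4) have non-commuting squares
  let φ : FreeGroup β →* Equiv.Perm (Fin 5) :=
    FreeGroup.lift fun x => if x = a then Equiv.swap 0 1 * Equiv.swap 1 2
      else Equiv.swap 2 3 * Equiv.swap 3 4
  have hφ := (h.map φ).eq
  simp only [φ, map_pow, lift_apply_of, if_neg hab.symm] at hφ
  exact absurd hφ (by decide)

theorem not_commute_of_of {a b : β} (hab : a ≠ b) : ¬Commute (of a) (of b) :=
  fun h => not_commute_of_sq_of_sq hab (h.pow_pow 2 2)

theorem isCyclic_of_subsingleton [Subsingleton β] : IsCyclic (FreeGroup β) := by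
  cases isEmpty_or_nonempty β
  · exact _root_.isCyclic_of_subsingleton
  · have := uniqueOfSubsingleton (Classical.arbitrary β)
    infer_instance

theorem isCyclic_of_commute (h : ∀ x y : FreeGroup β, Commute x y) : IsCyclic (FreeGroup β) :=
  have : Subsingleton β := ⟨fun _ _ => by_contra fun hab => not_commute_of_of hab (h _ _)⟩
  isCyclic_of_subsingleton

end FreeGroup

theorem IsFreeGroup.isCyclic_of_commute {G : Type*} [Group G] [IsFreeGroup G]
    (h : ∀ x y : G, Commute x y) : IsCyclic G :=
  (toFreeGroup G).isCyclic.mpr <| FreeGroup.isCyclic_of_commute fun x y => by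
    simpa using (h ((toFreeGroup G).symm x) ((toFreeGroup G).symm y)).map (toFreeGroup G)

namespace FreeGroup

variable {β : Type*}

theorem exists_zpow_eq_zpow_of_commute {c u : FreeGroup β} (h : Commute c u) (hu : u ≠ 1) :
    ∃ k m : ℤ, k ≠ 0 ∧ c ^ k = u ^ m := by
  let H := Subgroup.closure ({c, u} : Set (FreeGroup β))
  have hH : IsMulCommutative H := Subgroup.isMulCommutative_closure <| by
    rintro x (rfl | rfl) y (rfl | rfl) <;> first | rfl | exact h.eq | exact h.eq.symm
  have : IsCyclic H := IsFreeGroup.isCyclic_of_commute hH.is_comm.comm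
  obtain ⟨z, hz⟩ := IsCyclic.exists_generator (α := H)
  obtain ⟨m, hm⟩ := hz ⟨c, Subgroup.subset_closure (by simp)⟩
  obtain ⟨k, hk⟩ := hz ⟨u, Subgroup.subset_closure (by simp)⟩
  have hm : (z : FreeGroup β) ^ m = c := congrArg Subtype.val hm
  have hk : (z : FreeGroup β) ^ k = u := congrArg Subtype.val hk
  refine ⟨k, m, ?_, ?_⟩
  · rintro rfl
    exact hu (by simpa using hk.symm)
  · rw [← hm, ← hk, ← zpow_mul, ← zpow_mul, mul_comm]

theorem eq_zero_of_zpow_of_eq_zpow_of {a b : β} (hab : a ≠ b) {m n : ℤ}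
    (h : of a ^ m = of b ^ n) : m = 0 := by
  classical
  simpa [hab.symm] using congrArg (lift (Pi.mulSingle a (Multiplicative.ofAdd (1 : ℤ)))) h

theorem eq_one_of_commute_of_commute {a b : β} (hab : a ≠ b) {c : FreeGroup β}
    (ha : Commute c (of a)) (hb : Commute c (of b)) : c = 1 := by
  obtain ⟨k, m, hk, hkm⟩ := exists_zpow_eq_zpow_of_commute ha (of_ne_one a)
  obtain ⟨k', m', hk', hkm'⟩ := exists_zpow_eq_zpow_of_commute hb (of_ne_one b)
  have hab_pow : of a ^ (m * k') = of b ^ (m' * k) := by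
    rw [zpow_mul, zpow_mul, ← hkm, ← hkm', ← zpow_mul, ← zpow_mul, mul_comm]
  have hm : m = 0 := by simpa [hk'] using eq_zero_of_zpow_of_eq_zpow_of hab hab_pow
  rw [hm, zpow_zero, IsMulTorsionFree.zpow_eq_one_iff] at hkm
  exact hkm.resolve_right hk

theorem isCyclic_of_mem_center {z : FreeGroup β} (hz : z ∈ Subgroup.center _) (hz1 : z ≠ 1) :
    IsCyclic (FreeGroup β) :=
  have : Subsingleton β := ⟨fun _ _ => by_contra fun hab => hz1 <|
    eq_one_of_commute_of_commute hab (Subgroup.mem_center_iff.mp hz _).symm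
      (Subgroup.mem_center_iff.mp hz _).symm⟩
  isCyclic_of_subsingleton

end FreeGroup

theorem IsFreeGroup.isCyclic_of_mem_center {G : Type*} [Group G] [IsFreeGroup G] {z : G}
    (hz : z ∈ Subgroup.center G) (hz1 : z ≠ 1) : IsCyclic G := by
  refine (toFreeGroup G).isCyclic.mpr <| FreeGroup.isCyclic_of_mem_center (z := toFreeGroup G z)
    (Subgroup.mem_center_iff.mpr fun y => ?_) (by simpa using hz1)
  simpa using congrArg (toFreeGroup G) (Subgroup.mem_center_iff.mp hz ((toFreeGroup G).symm y))

namespace FreeGroup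

variable {β : Type*}

theorem commute_trans {u v w : FreeGroup β} (hu : u ≠ 1) (hvu : Commute v u)
    (huw : Commute u w) : Commute v w := by
  let K := Subgroup.centralizer ({u} : Set (FreeGroup β))
  have huK : u ∈ K := Subgroup.mem_centralizer_singleton_iff.mpr rfl
  have : IsCyclic K := IsFreeGroup.isCyclic_of_mem_center (z := ⟨u, huK⟩)
    (Subgroup.mem_center_iff.mpr fun y =>
      Subtype.ext (Subgroup.mem_centralizer_singleton_iff.mp y.2))
    (by simpa [Subtype.ext_iff] using hu)
  have hvw := (IsCyclic.isMulCommutative (α := K)).is_comm.comm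
    ⟨v, Subgroup.mem_centralizer_singleton_iff.mpr hvu.eq⟩
    ⟨w, Subgroup.mem_centralizer_singleton_iff.mpr huw.eq.symm⟩
  exact congrArg Subtype.val hvw

theorem isCyclic_centralizer {S : Set (FreeGroup β)} {g : FreeGroup β} (hg : g ∈ S)
    (hg1 : g ≠ 1) : IsCyclic (Subgroup.centralizer S) :=
  IsFreeGroup.isCyclic_of_commute fun x y => Subtype.ext <|
    commute_trans hg1 (Subgroup.mem_centralizer_iff.mp x.2 g hg).symm
      (Subgroup.mem_centralizer_iff.mp y.2 g hg)

end FreeGroup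

/-- The centralizer of a nontrivial normal subgroup of a non-abelian free group
is trivial. -/
theorem stmt_4 {α : Type*} (hα : ∃ a b : α, a ≠ b)
    (G : Subgroup (FreeGroup α)) [G.Normal] (hG : G ≠ ⊥) :
    Subgroup.centralizer (G : Set (FreeGroup α)) = ⊥ := by
  obtain ⟨a, b, hab⟩ := hα
  obtain ⟨g, hgG, hg1⟩ := G.bot_or_exists_ne_one.resolve_left hG
  have : IsCyclic (Subgroup.centralizer (G : Set (FreeGroup α))) :=
    FreeGroup.isCyclic_centralizer hgG hg1
  refine (Subgroup.eq_bot_iff_forall _).mpr fun x hx => by_contra fun hx1 => ?_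
  exact FreeGroup.not_commute_of_sq_of_sq hab <| FreeGroup.commute_trans hx1
    (Subgroup.commute_sq_of_isCyclic _ hx) (Subgroup.commute_sq_of_isCyclic _ hx).symm
end
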